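/- arXiv:2311.17701 — 4 statements merged into one kernel-verified Lean document; each statement's English description precedes it below -/
import Mathlib

section
/- Formal core of the Main Criterion (Runge's method): Given abstract Runge data (Φ, n, s, h, m, q, C) and in addition a real number τ with 0 ≤ τ < 1 such that (H4) for all x ∈ Φ, all i ∈ Fin s and all j ∈ Fin n one has q i x ≤ τ * h j x + C, there exists a constant C' ∈ ℝ such that for every x ∈ Φ one has min_{j ∈ Fin n} h j x ≤ C'. -/
/-! Let `M = min_j h j x`. Integrality (H1) gives `min_j m j x ≥ M - C`, so by (H3) the total
proximity `∑ i, q i x` is at least `M - 2C`. By (H2) all but one summand are at most `C`, and the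
remaining one is at most `τ M + C` by (H4). Hence `(1 - τ) M ≤ (s + 2) C`, and `τ < 1` bounds `M`. -/

open Finset

lemma Finset.inf'_sub_le_inf' {ι : Type*} {s : Finset ι} (hs : s.Nonempty) {f g : ι → ℝ} {C : ℝ}
    (hfg : ∀ j ∈ s, f j - C ≤ g j) : s.inf' hs f - C ≤ s.inf' hs g :=
  le_inf' hs _ fun j hj => (sub_le_sub_right (inf'_le f hj) C).trans (hfg j hj)

lemma Fintype.sum_le_add_card_sub_one_mul {ι : Type*} [Fintype ι] {f : ι → ℝ} {c : ℝ} (i₀ : ι)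
    (hf : ∀ i, i ≠ i₀ → f i ≤ c) : ∑ i, f i ≤ f i₀ + (Fintype.card ι - 1) * c := by
  classical
  have hcard : ((univ.erase i₀).card : ℝ) = Fintype.card ι - 1 := by
    rw [card_erase_of_mem (mem_univ i₀), card_univ,
      Nat.cast_sub (Fintype.card_pos_iff.mpr ⟨i₀⟩), Nat.cast_one]
  have hrest : ∑ i ∈ univ.erase i₀, f i ≤ (Fintype.card ι - 1) * c := by
    rw [← hcard, ← nsmul_eq_mul]
    exact sum_le_card_nsmul _ _ _ fun i hi => hf i (ne_of_mem_erase hi)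
  rw [← add_sum_erase _ _ (mem_univ i₀)]
  exact add_le_add_right hrest _

lemma inf'_le_of_runge_bounds {ι κ : Type*} [Fintype ι] [Fintype κ] (hne : (univ : Finset ι).Nonempty)
    {h m : ι → ℝ} {q : κ → ℝ} {C τ : ℝ} (hτ : τ < 1) (hhm : ∀ j, |h j - m j| ≤ C) (i₀ : κ)
    (hq : ∀ i, i ≠ i₀ → q i ≤ C) (hqm : |∑ i, q i - univ.inf' hne m| ≤ C)
    (hqh : ∀ j, q i₀ ≤ τ * h j + C) :
    univ.inf' hne h ≤ (Fintype.card κ + 2) * C / (1 - τ) := by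
  have hm : univ.inf' hne h - C ≤ univ.inf' hne m :=
    inf'_sub_le_inf' hne fun j _ => by linarith [(abs_le.mp (hhm j)).2]
  have hsum := Fintype.sum_le_add_card_sub_one_mul i₀ hq
  obtain ⟨j₁, -, hj₁⟩ := exists_mem_eq_inf' hne h
  have hqi₀ := hqh j₁
  rw [← hj₁] at hqi₀
  rw [le_div_iff₀ (sub_pos.mpr hτ)]
  linarith [(abs_le.mp hqm).1]

theorem runge_main_criterion_general
    (Φ : Type*) (n s : ℕ) (hn : 1 ≤ n)
    (h m : Fin n → Φ → ℝ) (q : Fin s → Φ → ℝ)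
    (C : ℝ)
    (H1 : ∀ x : Φ, ∀ j : Fin n, |h j x - m j x| ≤ C)
    (H2 : ∀ x : Φ, (∀ i : Fin s, -C ≤ q i x) ∧
      ∃ i0 : Fin s, ∀ i : Fin s, i ≠ i0 → q i x ≤ C)
    (H3 : ∀ x : Φ, |(∑ i : Fin s, q i x) -
      Finset.univ.inf' ⟨⟨0, hn⟩, Finset.mem_univ _⟩ (fun j => m j x)| ≤ C)
    (τ : ℝ) (hτ1 : τ < 1)
    (H4 : ∀ x : Φ, ∀ i : Fin s, ∀ j : Fin n, q i x ≤ τ * h j x + C) :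
    ∃ C' : ℝ, ∀ x : Φ,
      Finset.univ.inf' ⟨⟨0, hn⟩, Finset.mem_univ _⟩ (fun j => h j x) ≤ C' := by
  refine ⟨(s + 2) * C / (1 - τ), fun x => ?_⟩
  obtain ⟨i₀, hi₀⟩ := (H2 x).2
  simpa only [Fintype.card_fin] using
    inf'_le_of_runge_bounds _ hτ1 (H1 x) i₀ hi₀ (H3 x) (H4 x i₀)

/-- **Formal core of the Main Criterion (Runge's method).**
Given abstract Runge data `(Φ, n, s, h, m, q, C)` satisfying (H1)–(H3), together with
`0 ≤ τ < 1` satisfying (H4): `q i x ≤ τ * h j x + C` for all `x, i, j`, there is a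
constant `C'` such that `min_{j ∈ Fin n} h j x ≤ C'` for every `x ∈ Φ`. -/
theorem runge_main_criterion
    (Φ : Type*) (n s : ℕ) (hn : 1 ≤ n) (hs : 1 ≤ s)
    (h m : Fin n → Φ → ℝ) (q : Fin s → Φ → ℝ)
    (C : ℝ) (hC : 0 ≤ C)
    (H1 : ∀ x : Φ, ∀ j : Fin n, |h j x - m j x| ≤ C)
    (H2 : ∀ x : Φ, (∀ i : Fin s, -C ≤ q i x) ∧
      ∃ i0 : Fin s, ∀ i : Fin s, i ≠ i0 → q i x ≤ C)
    (H3 : ∀ x : Φ, |(∑ i : Fin s, q i x) -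
      Finset.univ.inf' ⟨⟨0, hn⟩, Finset.mem_univ _⟩ (fun j => m j x)| ≤ C)
    (τ : ℝ) (hτ0 : 0 ≤ τ) (hτ1 : τ < 1)
    (H4 : ∀ x : Φ, ∀ i : Fin s, ∀ j : Fin n, q i x ≤ τ * h j x + C) :
    ∃ C' : ℝ, ∀ x : Φ,
      Finset.univ.inf' ⟨⟨0, hn⟩, Finset.mem_univ _⟩ (fun j => h j x) ≤ C' :=
  runge_main_criterion_general Φ n s hn h m q C H1 H2 H3 τ hτ1 H4
end

section
/- Finiteness form of the Main Criterion: Given abstract Runge data (Φ, n, s, h, m, q, C), a real number τ with 0 ≤ τ < 1 satisfying (H4) for all x ∈ Φ, all i ∈ Fin s and all j ∈ Fin n, q i x ≤ τ * h j x + C, and assuming in addition the Northcott property that for every j ∈ Fin n and every real B the set {x ∈ Φ : h j x ≤ B} is finite, the type Φ is finite. -/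
/-!
Take `j` with `m j x` minimal. Then `h j x ≈ m j x ≈ ∑ i, q i x`, and since all but one of the
`q i x` are bounded by `C`, the sum is at most `q i₀ x + (s - 1) C ≤ τ h j x + s C`.
Hence `(1 - τ) h j x ≤ (s + 2) C`: every point has bounded height for some `j`, and Northcott
for the finitely many `j` leaves only finitely many points.
-/

open Finset

theorem Finset.sum_le_add_mul_of_forall_ne_le {κ : Type*} [Fintype κ] [DecidableEq κ]
    (q : κ → ℝ) (C : ℝ) (i₀ : κ) (hq : ∀ i, i ≠ i₀ → q i ≤ C) :
    ∑ i, q i ≤ q i₀ + ((Fintype.card κ : ℝ) - 1) * C := by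
  have hcard : ((univ.erase i₀).card : ℝ) = Fintype.card κ - 1 := by
    rw [← card_univ, ← card_erase_add_one (mem_univ i₀)]
    push_cast
    ring
  calc ∑ i, q i = q i₀ + ∑ i ∈ univ.erase i₀, q i := (add_sum_erase _ _ (mem_univ i₀)).symm
    _ ≤ q i₀ + ∑ _i ∈ univ.erase i₀, C := by
      gcongr with i hi
      exact hq i (ne_of_mem_erase hi)
    _ = q i₀ + ((Fintype.card κ : ℝ) - 1) * C := by rw [sum_const, nsmul_eq_mul, hcard]

theorem exists_le_of_runge_bounds {ι κ : Type*} [Fintype ι] [Fintype κ]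
    (hne : (univ : Finset ι).Nonempty) (h m : ι → ℝ) (q : κ → ℝ) (C τ : ℝ) (hτ : τ < 1)
    (H1 : ∀ j, |h j - m j| ≤ C) (i₀ : κ) (H2 : ∀ i, i ≠ i₀ → q i ≤ C)
    (H3 : |∑ i, q i - univ.inf' hne m| ≤ C) (H4 : ∀ j, q i₀ ≤ τ * h j + C) :
    ∃ j, h j ≤ ((Fintype.card κ : ℝ) + 2) * C / (1 - τ) := by
  classical
  obtain ⟨j, -, hj⟩ := exists_mem_eq_inf' hne m
  refine ⟨j, (le_div_iff₀ (sub_pos.mpr hτ)).mpr ?_⟩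
  have hhm := (abs_le.mp (H1 j)).2
  have hmq := (abs_le.mp H3).1
  have hsum := sum_le_add_mul_of_forall_ne_le q C i₀ H2
  rw [hj] at hmq
  linarith [H4 j]

theorem finite_of_forall_exists_le {ι Φ : Type*} [Finite ι] (h : ι → Φ → ℝ) (B : ℝ)
    (hfin : ∀ j, {x | h j x ≤ B}.Finite) (hle : ∀ x, ∃ j, h j x ≤ B) : Finite Φ := by
  rw [← Set.finite_univ_iff]
  refine (Set.finite_iUnion hfin).subset fun x _ => ?_
  simpa only [Set.mem_iUnion, Set.mem_ofPred_eq] using hle x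

theorem runge_main_criterion_finiteness_general
    (Φ : Type*) (n s : ℕ) (hn : 1 ≤ n)
    (h m : Fin n → Φ → ℝ) (q : Fin s → Φ → ℝ)
    (C : ℝ)
    (H1 : ∀ x : Φ, ∀ j : Fin n, |h j x - m j x| ≤ C)
    (H2 : ∀ x : Φ, (∀ i : Fin s, -C ≤ q i x) ∧
      ∃ i0 : Fin s, ∀ i : Fin s, i ≠ i0 → q i x ≤ C)
    (H3 : ∀ x : Φ, |(∑ i : Fin s, q i x) -
      Finset.univ.inf' ⟨⟨0, hn⟩, Finset.mem_univ _⟩ (fun j => m j x)| ≤ C)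
    (τ : ℝ) (hτ1 : τ < 1)
    (H4 : ∀ x : Φ, ∀ i : Fin s, ∀ j : Fin n, q i x ≤ τ * h j x + C)
    (Northcott : ∀ j : Fin n, ∀ B : ℝ, {x : Φ | h j x ≤ B}.Finite) :
    Finite Φ := by
  refine finite_of_forall_exists_le h ((s + 2) * C / (1 - τ)) (fun j => Northcott j _) fun x => ?_
  obtain ⟨-, i₀, hi₀⟩ := H2 x
  simpa only [Fintype.card_fin] using
    exists_le_of_runge_bounds _ (h · x) (m · x) (q · x) C τ hτ1 (H1 x) i₀ hi₀ (H3 x) (H4 x i₀)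

/-- **Finiteness form of the Main Criterion.**
Given abstract Runge data `(Φ, n, s, h, m, q, C)` satisfying (H1)–(H3), together with
`0 ≤ τ < 1` satisfying (H4), and the Northcott property that for every `j` and every
bound `B` the set `{x ∈ Φ : h j x ≤ B}` is finite, the type `Φ` is finite. -/
theorem runge_main_criterion_finiteness
    (Φ : Type*) (n s : ℕ) (hn : 1 ≤ n) (hs : 1 ≤ s)
    (h m : Fin n → Φ → ℝ) (q : Fin s → Φ → ℝ)
    (C : ℝ) (hC : 0 ≤ C)
    (H1 : ∀ x : Φ, ∀ j : Fin n, |h j x - m j x| ≤ C)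
    (H2 : ∀ x : Φ, (∀ i : Fin s, -C ≤ q i x) ∧
      ∃ i0 : Fin s, ∀ i : Fin s, i ≠ i0 → q i x ≤ C)
    (H3 : ∀ x : Φ, |(∑ i : Fin s, q i x) -
      Finset.univ.inf' ⟨⟨0, hn⟩, Finset.mem_univ _⟩ (fun j => m j x)| ≤ C)
    (τ : ℝ) (hτ0 : 0 ≤ τ) (hτ1 : τ < 1)
    (H4 : ∀ x : Φ, ∀ i : Fin s, ∀ j : Fin n, q i x ≤ τ * h j x + C)
    (Northcott : ∀ j : Fin n, ∀ B : ℝ, {x : Φ | h j x ≤ B}.Finite) :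
    Finite Φ :=
  runge_main_criterion_finiteness_general Φ n s hn h m q C H1 H2 H3 τ hτ1 H4 Northcott
end

section
/- Key intermediate step of the Main Criterion: Given abstract Runge data (Φ, n, s, h, m, q, C), for every x ∈ Φ there exist indices j0 ∈ Fin n and i0 ∈ Fin s such that m j0 x = min_{j ∈ Fin n} m j x and |h j0 x − q i0 x| ≤ (2*n + s) * C; that is, the height of x relative to the divisor component to which x is closest equals, up to a bounded error, the proximity of x to a single component of the intersection ∩_j D_j. -/
/-!
Let `j0` realise the minimum of the `m j x` and let `i0` be the one component that `x` may
approximate. All other `q i x` lie in `[-C, C]`, so `q i0 x` is the sum `∑ i, q i x` up to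
`(s - 1) C`; by (H3) that sum is `m j0 x` up to `C`, and by (H1) `m j0 x` is `h j0 x` up to `C`.
-/

open Finset

theorem abs_sum_sub_apply_le {ι : Type*} [Fintype ι] [DecidableEq ι] (f : ι → ℝ) {C : ℝ}
    (i0 : ι) (hlow : ∀ i, -C ≤ f i) (hup : ∀ i ≠ i0, f i ≤ C) :
    |(∑ i, f i) - f i0| ≤ (Fintype.card ι - 1) * C := by
  rw [← add_sum_erase _ _ (mem_univ i0), add_sub_cancel_left]
  calc |∑ i ∈ univ.erase i0, f i| ≤ ∑ i ∈ univ.erase i0, |f i| := abs_sum_le_sum_abs _ _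
    _ ≤ ∑ _i ∈ univ.erase i0, C :=
        sum_le_sum fun i hi => abs_le.mpr ⟨hlow i, hup i (ne_of_mem_erase hi)⟩
    _ = (Fintype.card ι - 1) * C := by
        rw [sum_const, nsmul_eq_mul, cast_card_erase_of_mem (mem_univ i0), card_univ]

theorem runge_key_intermediate_step_general
    (Φ : Type*) (n s : ℕ) (hn : 1 ≤ n)
    (h m : Fin n → Φ → ℝ) (q : Fin s → Φ → ℝ)
    (C : ℝ)
    (H1 : ∀ x : Φ, ∀ j : Fin n, |h j x - m j x| ≤ C)
    (H2 : ∀ x : Φ, (∀ i : Fin s, -C ≤ q i x) ∧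
      ∃ i0 : Fin s, ∀ i : Fin s, i ≠ i0 → q i x ≤ C)
    (H3 : ∀ x : Φ, |(∑ i : Fin s, q i x) -
      Finset.univ.inf' ⟨⟨0, hn⟩, Finset.mem_univ _⟩ (fun j => m j x)| ≤ C) :
    ∀ x : Φ, ∃ (j0 : Fin n) (i0 : Fin s),
      m j0 x = Finset.univ.inf' ⟨⟨0, hn⟩, Finset.mem_univ _⟩ (fun j => m j x) ∧
      |h j0 x - q i0 x| ≤ (2 * n + s) * C := by
  intro x
  obtain ⟨j0, -, hj0⟩ := exists_mem_eq_inf' ⟨⟨0, hn⟩, mem_univ _⟩ fun j => m j x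
  obtain ⟨hlow, i0, hup⟩ := H2 x
  refine ⟨j0, i0, hj0.symm, ?_⟩
  have hm : |m j0 x - ∑ i, q i x| ≤ C := by rw [abs_sub_comm, ← hj0]; exact H3 x
  have hq := abs_sum_sub_apply_le (fun i => q i x) i0 hlow hup
  rw [Fintype.card_fin] at hq
  have hC : 0 ≤ C := (abs_nonneg _).trans (H1 x j0)
  have hn' : (1 : ℝ) ≤ n := by exact_mod_cast hn
  calc |h j0 x - q i0 x|
      ≤ |h j0 x - ∑ i, q i x| + |(∑ i, q i x) - q i0 x| := abs_sub_le _ _ _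
    _ ≤ |h j0 x - m j0 x| + |m j0 x - ∑ i, q i x| + |(∑ i, q i x) - q i0 x| := by
        gcongr; exact abs_sub_le _ _ _
    _ ≤ C + C + (s - 1) * C := by gcongr; exact H1 x j0
    _ ≤ (2 * n + s) * C := by nlinarith

/-- **Key intermediate step of the Main Criterion.**
Given abstract Runge data `(Φ, n, s, h, m, q, C)` satisfying (H1)–(H3), for every
`x ∈ Φ` there are indices `j0 ∈ Fin n` and `i0 ∈ Fin s` such that
`m j0 x = min_{j} m j x` and `|h j0 x - q i0 x| ≤ (2n + s) * C`. -/
theorem runge_key_intermediate_step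
    (Φ : Type*) (n s : ℕ) (hn : 1 ≤ n) (hs : 1 ≤ s)
    (h m : Fin n → Φ → ℝ) (q : Fin s → Φ → ℝ)
    (C : ℝ) (hC : 0 ≤ C)
    (H1 : ∀ x : Φ, ∀ j : Fin n, |h j x - m j x| ≤ C)
    (H2 : ∀ x : Φ, (∀ i : Fin s, -C ≤ q i x) ∧
      ∃ i0 : Fin s, ∀ i : Fin s, i ≠ i0 → q i x ≤ C)
    (H3 : ∀ x : Φ, |(∑ i : Fin s, q i x) -
      Finset.univ.inf' ⟨⟨0, hn⟩, Finset.mem_univ _⟩ (fun j => m j x)| ≤ C) :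
    ∀ x : Φ, ∃ (j0 : Fin n) (i0 : Fin s),
      m j0 x = Finset.univ.inf' ⟨⟨0, hn⟩, Finset.mem_univ _⟩ (fun j => m j x) ∧
      |h j0 x - q i0 x| ≤ (2 * n + s) * C :=
  runge_key_intermediate_step_general Φ n s hn h m q C H1 H2 H3
end

section
/- Siegel-type construction of an auxiliary polynomial: Let K be a field, let n ≥ 1, d ≥ 1, s, μ be natural numbers, and let p_1, …, p_d be points of K^n. If Nat.choose (n + s) n > d * Nat.choose (n + μ) n, then there exists a nonzero polynomial f in n variables over K with total degree at most s such that for every i ∈ {1,…,d}, every monomial occurring in the translated polynomial f(X + p_i) has total degree at least μ + 1 (i.e., f vanishes at each p_i with multiplicity greater than μ). (This is the existence of the divisor D with multiplicity at least μ along the d geometric points of Y in the proof of the GCD bound.) -/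
/-!
Polynomials of total degree at most `s` in `n` variables form a space of dimension
`C(n + s, n)`. Vanishing to order greater than `μ` at a point `p` means that the `C(n + μ, n)`
coefficients of degree at most `μ` of `f(X + p)` vanish, and these are linear in `f`. With
fewer conditions than dimensions, some nonzero `f` satisfies all of them.
-/

open MvPolynomial Finset Module

namespace Finsupp

variable (σ : Type*) [Fintype σ] [DecidableEq σ]

/-- Exponent vectors of total degree exactly `s` in one more variable, with the slack
coordinate forgotten. -/
noncomputable def degreeLE (s : ℕ) : Finset (σ →₀ ℕ) :=
  ((univ : Finset (Option σ)).finsuppAntidiag s).image Finsupp.some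

variable {σ}

theorem mem_degreeLE {s : ℕ} {e : σ →₀ ℕ} : e ∈ degreeLE σ s ↔ ∑ i, e i ≤ s := by
  simp only [degreeLE, mem_image, mem_finsuppAntidiag, subset_univ, and_true,
    Fintype.sum_option]
  constructor
  · rintro ⟨P, hP, rfl⟩
    simp only [some_apply]
    omega
  · intro he
    refine ⟨e.optionElim (s - ∑ i, e i), ?_, some_optionElim _ _⟩
    simp only [optionElim_apply_eq_elim, Option.elim_none, Option.elim_some]
    omega

theorem coe_degreeLE (s : ℕ) :
    (degreeLE σ s : Set (σ →₀ ℕ)) = {e | (e.sum fun _ k => k) ≤ s} := by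
  ext e
  simp [mem_degreeLE, sum_fintype]

theorem card_degreeLE (s : ℕ) :
    #(degreeLE σ s) = (Fintype.card σ + s).choose (Fintype.card σ) := by
  rw [degreeLE, card_image_of_injOn, card_finsuppAntidiag_nat_eq_choose, card_univ,
    Fintype.card_option, Nat.add_right_comm, Nat.add_sub_cancel, Nat.choose_symm_add]
  intro P hP Q hQ hPQ
  simp only [mem_coe, mem_finsuppAntidiag, subset_univ, and_true, Fintype.sum_option] at hP hQ
  have hnone : P none = Q none := by
    have : ∑ i, P.some i = ∑ i, Q.some i := by rw [hPQ]
    simp only [some_apply] at this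
    omega
  rw [← optionElim_some P, ← optionElim_some Q, hPQ, hnone]

end Finsupp

namespace MvPolynomial

variable {σ : Type*} [Fintype σ]

theorem finrank_restrictTotalDegree (R : Type*) [CommRing R] [Nontrivial R] (s : ℕ) :
    finrank R (restrictTotalDegree σ R s) = (Fintype.card σ + s).choose (Fintype.card σ) := by
  classical
  rw [restrictTotalDegree, finrank_eq_nat_card_basis (basisRestrictSupport R _),
    ← Finsupp.coe_degreeLE, Nat.card_coe_set_eq, Set.ncard_coe_finset, Finsupp.card_degreeLE]

instance finiteDimensional_restrictTotalDegree (K : Type*) [Field K] (s : ℕ) :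
    FiniteDimensional K (restrictTotalDegree σ K s) := by
  classical
  have : Finite {e : σ →₀ ℕ | (e.sum fun _ k => k) ≤ s} := by
    rw [← Finsupp.coe_degreeLE]
    infer_instance
  exact Module.Finite.of_basis (basisRestrictSupport K _)

theorem exists_ne_zero_totalDegree_le_of_finrank_lt {K W : Type*} [Field K] [AddCommGroup W]
    [Module K W] [FiniteDimensional K W] (L : MvPolynomial σ K →ₗ[K] W) {s : ℕ}
    (h : finrank K W < (Fintype.card σ + s).choose (Fintype.card σ)) :
    ∃ f : MvPolynomial σ K, f ≠ 0 ∧ f.totalDegree ≤ s ∧ L f = 0 := by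
  rw [← finrank_restrictTotalDegree K s] at h
  obtain ⟨⟨f, hf⟩, hker, hne⟩ := (Submodule.ne_bot_iff _).mp
    (LinearMap.ker_ne_bot_of_finrank_lt (f := L ∘ₗ Submodule.subtype _) h)
  exact ⟨f, by simpa using hne, (mem_restrictTotalDegree σ (m := s) f).mp hf, hker⟩

variable {ι K : Type*} [DecidableEq σ] [Field K]

noncomputable def lowDegreeCoeffsAt (p : ι → σ → K) (μ : ℕ) :
    MvPolynomial σ K →ₗ[K] (ι × Finsupp.degreeLE σ μ → K) :=
  LinearMap.pi fun x => lcoeff K x.2 ∘ₗ (aeval fun k => X k + C (p x.1 k)).toLinearMap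

theorem lt_sum_of_mem_support_of_lowDegreeCoeffsAt_eq_zero {p : ι → σ → K} {μ : ℕ}
    {f : MvPolynomial σ K} (hf : lowDegreeCoeffsAt p μ f = 0) (i : ι) {e : σ →₀ ℕ}
    (he : e ∈ (aeval (fun k => X k + C (p i k)) f).support) : μ < ∑ k, e k := by
  by_contra! hle
  exact mem_support_iff.mp he (congr_fun hf (i, ⟨e, Finsupp.mem_degreeLE.mpr hle⟩))

theorem exists_ne_zero_totalDegree_le_vanishing [Fintype ι] (p : ι → σ → K) {s μ : ℕ}
    (h : Fintype.card ι * (Fintype.card σ + μ).choose (Fintype.card σ) <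
      (Fintype.card σ + s).choose (Fintype.card σ)) :
    ∃ f : MvPolynomial σ K, f ≠ 0 ∧ f.totalDegree ≤ s ∧
      ∀ i, ∀ e ∈ (aeval (fun k => X k + C (p i k)) f).support, μ < ∑ k, e k := by
  have hconditions : finrank K (ι × Finsupp.degreeLE σ μ → K) =
      Fintype.card ι * (Fintype.card σ + μ).choose (Fintype.card σ) := by
    rw [finrank_fintype_fun_eq_card, Fintype.card_prod, Fintype.card_coe,
      Finsupp.card_degreeLE]
  obtain ⟨f, hf0, hdeg, hf⟩ :=
    exists_ne_zero_totalDegree_le_of_finrank_lt (lowDegreeCoeffsAt p μ) (hconditions ▸ h)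
  exact ⟨f, hf0, hdeg, fun i _ => lt_sum_of_mem_support_of_lowDegreeCoeffsAt_eq_zero hf i⟩

end MvPolynomial

theorem siegel_auxiliary_polynomial_general (K : Type*) [Field K]
    (n d s μ : ℕ)
    (p : Fin d → Fin n → K)
    (hdim : d * Nat.choose (n + μ) n < Nat.choose (n + s) n) :
    ∃ f : MvPolynomial (Fin n) K, f ≠ 0 ∧ f.totalDegree ≤ s ∧
      ∀ i : Fin d,
        ∀ e ∈ (MvPolynomial.aeval
            (fun k : Fin n => MvPolynomial.X k + MvPolynomial.C (p i k)) f).support,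
          μ + 1 ≤ ∑ k : Fin n, e k :=
  exists_ne_zero_totalDegree_le_vanishing p (by simpa only [Fintype.card_fin])

/-- **Siegel-type construction of an auxiliary polynomial.**
Let `K` be a field, `n ≥ 1`, `d ≥ 1`, `s, μ` natural numbers, and let
`p 1, …, p d` be points of `K^n`. If `C(n + s, n) > d * C(n + μ, n)`, then there is a
nonzero polynomial `f` in `n` variables over `K` of total degree at most `s` such
that, for each `i`, every monomial occurring in the translate `f(X + p i)` has total
degree at least `μ + 1`; that is, `f` vanishes at each `p i` with multiplicity
greater than `μ`. -/
theorem siegel_auxiliary_polynomial (K : Type*) [Field K]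
    (n d s μ : ℕ) (hn : 1 ≤ n) (hd : 1 ≤ d)
    (p : Fin d → Fin n → K)
    (hdim : d * Nat.choose (n + μ) n < Nat.choose (n + s) n) :
    ∃ f : MvPolynomial (Fin n) K, f ≠ 0 ∧ f.totalDegree ≤ s ∧
      ∀ i : Fin d,
        ∀ e ∈ (MvPolynomial.aeval
            (fun k : Fin n => MvPolynomial.X k + MvPolynomial.C (p i k)) f).support,
          μ + 1 ≤ ∑ k : Fin n, e k :=
  siegel_auxiliary_polynomial_general K n d s μ p hdim
end
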